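/- Let Γ be a 1-patch nonorientable Tait-colored cubic graph other than the theta graph. Then Γ admits a c-compression (compression along an orientation-reversing edge) whose result is either a nonorientable graph or the theta graph. -/

import Mathlib

/-!
Since `Γ` is 1-patch, the edges of the two colors other than `c₀` form a single cycle; draw it as
an `n`-gon. The edges of color `c₀` are chords, and a chord is orientation-reversing iff it joins
positions of equal parity. Compressing a reversing chord `x — y` reverses one of the two arcs it
cuts off, so if the compression is bipartite, every other chord is reversing iff it crosses
`x — y`. Suppose all these compressions are bipartite. If every chord is reversing, every chord
is a diameter, and the chords at two adjacent positions close up a short bicolored cycle.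
Otherwise shift positions so that the last chord is reversing and the first is not: the first
reversing position `L` cuts off an arc `[0, L)` closed under the chords and under one color of
the cycle, again a bicolored cycle that misses some vertex. Either way `Γ` is not 1-patch. For
`n = 4` every compression is the theta graph.
-/

/-- A Tait-colored cubic graph (multigraphs allowed), encoded by three
fixed-point-free involutions on the vertex set, one for each color `c : Fin 3`:
`mat c` matches every vertex to the other endpoint of its unique edge of color `c`. -/
structure TaitGraph (V : Type) where
  mat : Fin 3 → V → V
  invol : ∀ c v, mat c (mat c v) = v
  nofix : ∀ c v, mat c v ≠ v

namespace TaitGraph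

variable {V V' : Type}

/-- Two vertices lie on the same bi-colored cycle of the two colors other than `c`. -/
def Conn (Γ : TaitGraph V) (c : Fin 3) : V → V → Prop :=
  Relation.ReflTransGen (fun x y => ∃ c', c' ≠ c ∧ Γ.mat c' x = y)

/-- The patch number for the pair of colors other than `c`: the number of
bi-colored cycles of those two colors. -/
noncomputable def patches (Γ : TaitGraph V) (c : Fin 3) : ℕ :=
  Nat.card (Quot (Γ.Conn c))

def OnePatch (Γ : TaitGraph V) : Prop := ∀ c, Γ.patches c = 1

def Bipartite (Γ : TaitGraph V) : Prop :=
  ∃ s : V → Bool, ∀ c v, s (Γ.mat c v) = !s v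

def Connected (Γ : TaitGraph V) : Prop :=
  Nonempty V ∧ ∀ x y : V, Relation.ReflTransGen (fun a b => ∃ c, Γ.mat c a = b) x y

/-- The number of edges: for each color, the edges of that color are the orbits
of the corresponding involution. -/
noncomputable def edgeCount (Γ : TaitGraph V) : ℕ :=
  ∑ c : Fin 3, Nat.card (Quot (fun x y : V => Γ.mat c x = y))

/-- Euler characteristic of the induced surface, computed from its CW structure:
vertices minus edges plus 2-cells (one 2-cell per bi-colored cycle). -/
noncomputable def chiS (Γ : TaitGraph V) : ℤ :=
  (Nat.card V : ℤ) - (Γ.edgeCount : ℤ) + (∑ c : Fin 3, (Γ.patches c : ℤ))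

/-- The edge of color `c` at `v` is orientation-reversing: its endpoints lie on the same
bi-colored cycle of the other two colors and receive the same sign in any alternating
`±`-labeling of the bi-colored cycles. -/
def OrientationReversing (Γ : TaitGraph V) (c : Fin 3) (v : V) : Prop :=
  Γ.Conn c v (Γ.mat c v) ∧
    ∀ s : V → Bool, (∀ c' v', c' ≠ c → s (Γ.mat c' v') = !s v') → s (Γ.mat c v) = s v

/-- The edge of color `c` at `v` is orientation-preserving: its endpoints lie on the same
bi-colored cycle of the other two colors and receive opposite signs in any alternating
`±`-labeling of the bi-colored cycles. -/
def OrientationPreserving (Γ : TaitGraph V) (c : Fin 3) (v : V) : Prop :=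
  Γ.Conn c v (Γ.mat c v) ∧
    ∀ s : V → Bool, (∀ c' v', c' ≠ c → s (Γ.mat c' v') = !s v') → s (Γ.mat c v) = !s v

/-- `Γ'` is the compression of `Γ` along the (non-parallel) edge of color `c` with
endpoints `v` and `Γ.mat c v`: delete the edge and its endpoints, and for each of the
other two colors merge the two deleted-vertex edges into a single edge. -/
def IsCompression (Γ : TaitGraph V) (c : Fin 3) (v : V) (Γ' : TaitGraph V') : Prop :=
  ∃ φ : V' ≃ {w : V // w ≠ v ∧ w ≠ Γ.mat c v},
    (∀ w : V', ((φ (Γ'.mat c w) : V)) = Γ.mat c ((φ w : V))) ∧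
    ∀ c' : Fin 3, c' ≠ c → ∀ w : V',
      (Γ.mat c' ((φ w : V)) = v ∧ ((φ (Γ'.mat c' w) : V)) = Γ.mat c' (Γ.mat c v)) ∨
      (Γ.mat c' ((φ w : V)) = Γ.mat c v ∧ ((φ (Γ'.mat c' w) : V)) = Γ.mat c' v) ∨
      (Γ.mat c' ((φ w : V)) ≠ v ∧ Γ.mat c' ((φ w : V)) ≠ Γ.mat c v ∧
        ((φ (Γ'.mat c' w) : V)) = Γ.mat c' ((φ w : V)))

end TaitGraph

/-- Bundled finite Tait-colored cubic graphs. -/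
def TG : Type := Σ n : ℕ, TaitGraph (Fin n)

/-- `Y` is obtained from `X` by a p-compression: compression along a connecting edge
(one whose endpoints lie on distinct bi-colored cycles of the opposite two colors). -/
def PComp (X Y : TG) : Prop :=
  ∃ (c : Fin 3) (v : Fin X.1),
    ¬ X.2.Conn c v (X.2.mat c v) ∧ X.2.IsCompression c v Y.2

/-- `Y` is obtained from `X` by a t-compression: compression along a non-parallel
orientation-preserving edge. -/
def TComp (X Y : TG) : Prop :=
  ∃ (c : Fin 3) (v : Fin X.1),
    X.2.OrientationPreserving c v ∧
    (∀ c' : Fin 3, c' ≠ c → X.2.mat c' v ≠ X.2.mat c v) ∧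
    X.2.IsCompression c v Y.2

/-- `Y` is obtained from `X` by a c-compression: compression along an
orientation-reversing edge. -/
def CComp (X Y : TG) : Prop :=
  ∃ (c : Fin 3) (v : Fin X.1),
    X.2.OrientationReversing c v ∧ X.2.IsCompression c v Y.2

/-- The theta graph: two vertices joined by three edges, one of each color.  (Any
Tait-colored cubic graph on two vertices is the theta graph.) -/
def IsTheta (X : TG) : Prop := X.1 = 2

lemma fin_three_eq_or_eq {a b c x : Fin 3} (hab : a ≠ b) (hac : a ≠ c) (hbc : b ≠ c)
    (hx : x ≠ c) : x = a ∨ x = b := by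
  revert a b c x; decide

lemma Finset.even_card_of_involution {α : Type*} [DecidableEq α] (s : Finset α) (g : α → α)
    (hmaps : ∀ x ∈ s, g x ∈ s) (hinv : ∀ x ∈ s, g (g x) = x)
    (hne : ∀ x ∈ s, g x ≠ x) : Even s.card := by
  let σ : Equiv.Perm s := Function.Involutive.toPerm (fun x => ⟨g x, hmaps x x.2⟩)
    fun x => Subtype.ext (hinv x x.2)
  have hσ : σ ^ 2 = 1 := by
    rw [sq]; exact Equiv.ext fun x => Subtype.ext (hinv x x.2)
  have hsupp : σ.support = Finset.univ := Finset.eq_univ_of_forall fun x =>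
    Equiv.Perm.mem_support.2 fun h => hne x x.2 (congrArg Subtype.val h)
  have := Equiv.Perm.two_dvd_card_support hσ
  rw [hsupp, Finset.card_univ, Fintype.card_coe] at this
  exact even_iff_two_dvd.2 this

lemma Int.eq_iff_emod_two_of_flip {ℓ : ℤ → Bool} {a b : ℤ}
    (h : ∀ s, a ≤ s → s < b → ℓ (s + 1) = !ℓ s) :
    ∀ s, a ≤ s → s ≤ b → (ℓ s = ℓ a ↔ (s - a) % 2 = 0) := by
  intro s has
  induction s, has using Int.leInduction with
  | base => simp
  | succ s has ih =>
    intro hsb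
    rw [h s has (by omega)]
    cases hs : ℓ s <;> cases ha : ℓ a <;> simp_all <;> omega

lemma Int.exists_and_not_succ {Q : ℤ → Prop} {i j : ℤ} (hij : i ≤ j) (hi : Q i)
    (hj : ¬ Q j) : ∃ m, Q m ∧ ¬ Q (m + 1) := by
  by_contra! h
  induction j, hij using Int.leInduction with
  | base => exact hj hi
  | succ j _ ih => exact hj (h j (by_contra ih))

lemma Nat.card_subtype_ne_and_ne {V : Type} [Finite V] {x y : V} (hxy : x ≠ y) :
    Nat.card {w : V // w ≠ x ∧ w ≠ y} = Nat.card V - 2 := by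
  classical
  have := Fintype.ofFinite V
  rw [Nat.card_eq_fintype_card, Nat.card_eq_fintype_card, Fintype.card_subtype]
  have h : Finset.univ.filter (fun w : V => w ≠ x ∧ w ≠ y) = Finset.univ \ {x, y} := by
    ext w; simp
  rw [h, Finset.card_sdiff_of_subset (Finset.subset_univ _), Finset.card_pair hxy,
    Finset.card_univ]

namespace Equiv.Perm

variable {α : Type*} {r s : Perm α}

lemma apply_zpow_apply_of_involutive (hr : Function.Involutive r) (hs : Function.Involutive s)
    (i : ℤ) (x : α) : r (((s * r) ^ i) x) = ((s * r) ^ (-i)) (r x) := by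
  have hr₁ : r⁻¹ = r := inv_eq_of_mul_eq_one_left (Equiv.ext hr)
  have hs₁ : s⁻¹ = s := inv_eq_of_mul_eq_one_left (Equiv.ext hs)
  have hconj : r * (s * r) * r⁻¹ = (s * r)⁻¹ := by
    rw [mul_inv_rev, hr₁, hs₁, mul_assoc, mul_assoc, show r * r = 1 from Equiv.ext hr, mul_one]
  have h := congrArg (· ^ i) hconj
  simp only [conj_zpow, inv_zpow'] at h
  rw [← h]
  simp [Equiv.Perm.mul_apply]

/-- Conjugation by `r` inverts `s * r`, so `r x = (s * r) ^ m x` would make `(s * r) ^ ⌊m/2⌋ x`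
a fixed point of `r` (for even `m`) or its image under `r` a fixed point of `s` (for odd `m`). -/
lemma apply_zpow_apply_ne_zpow_apply (hr : Function.Involutive r) (hs : Function.Involutive s)
    (hr' : ∀ x, r x ≠ x) (hs' : ∀ x, s x ≠ x) (x : α) (i j : ℤ) :
    r (((s * r) ^ i) x) ≠ ((s * r) ^ j) x := by
  intro h
  rw [apply_zpow_apply_of_involutive hr hs] at h
  have hrx : r x = ((s * r) ^ (i + j)) x := by
    rw [zpow_add, mul_apply, ← h, ← mul_apply, ← zpow_add, add_neg_cancel, zpow_zero,
      one_apply]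
  obtain ⟨k, hm | hm⟩ := Int.even_or_odd' (i + j)
  all_goals
    have hk : r (((s * r) ^ k) x) = ((s * r) ^ (-k + (i + j))) x := by
      rw [apply_zpow_apply_of_involutive hr hs, hrx, ← mul_apply, ← zpow_add]
    rw [hm] at hk
  · exact hr' _ (by rw [hk, show -k + 2 * k = k by ring])
  · rw [show -k + (2 * k + 1) = 1 + k by ring, zpow_one_add, mul_apply, mul_apply] at hk
    exact hs' _ hk.symm

/-- The walk `x, r x, s (r x), r (s (r x)), …` indexed by `ℤ`. -/
def altWalk (r s : Perm α) (x : α) (k : ℤ) : α :=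
  if k % 2 = 0 then ((s * r) ^ (k / 2)) x else r (((s * r) ^ (k / 2)) x)

lemma altWalk_of_even {x : α} {k : ℤ} (hk : k % 2 = 0) :
    altWalk r s x k = ((s * r) ^ (k / 2)) x := if_pos hk

lemma altWalk_of_odd {x : α} {k : ℤ} (hk : k % 2 = 1) :
    altWalk r s x k = r (((s * r) ^ (k / 2)) x) := if_neg (by omega)

lemma apply_altWalk_of_even {x : α} {k : ℤ} (hk : k % 2 = 0) :
    r (altWalk r s x k) = altWalk r s x (k + 1) := by
  rw [altWalk_of_even hk, altWalk_of_odd (by omega), show (k + 1) / 2 = k / 2 by omega]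

lemma apply_altWalk_of_odd {x : α} {k : ℤ} (hk : k % 2 = 1) :
    s (altWalk r s x k) = altWalk r s x (k + 1) := by
  rw [altWalk_of_odd hk, altWalk_of_even (by omega), show (k + 1) / 2 = 1 + k / 2 by omega,
    zpow_one_add]
  rfl

lemma zpow_apply_eq_zpow_apply_iff {g : Perm α} {x : α} {i j : ℤ} :
    (g ^ i) x = (g ^ j) x ↔ i ≡ j [ZMOD MulAction.period g x] := by
  rw [Int.modEq_iff_dvd, ← MulAction.zpow_smul_eq_iff_period_dvd, Perm.smul_def,
    ← neg_add_eq_sub, zpow_add, mul_apply, zpow_neg, inv_eq_iff_eq, eq_comm]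

lemma altWalk_eq_altWalk_iff (hr : Function.Involutive r) (hs : Function.Involutive s)
    (hr' : ∀ x, r x ≠ x) (hs' : ∀ x, s x ≠ x) (x : α) (j k : ℤ) :
    altWalk r s x j = altWalk r s x k ↔ j ≡ k [ZMOD 2 * MulAction.period (s * r) x] := by
  have hhalf : j % 2 = k % 2 →
      (j / 2 ≡ k / 2 [ZMOD MulAction.period (s * r) x] ↔
        j ≡ k [ZMOD 2 * MulAction.period (s * r) x]) := fun hjk => by
    rw [Int.modEq_iff_dvd, Int.modEq_iff_dvd, show k - j = 2 * (k / 2 - j / 2) by omega,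
      mul_dvd_mul_iff_left two_ne_zero]
  have hparity : j % 2 ≠ k % 2 → ¬ j ≡ k [ZMOD 2 * MulAction.period (s * r) x] :=
    fun hjk h => hjk (Int.ModEq.of_dvd (dvd_mul_right 2 _) h)
  have hne := apply_zpow_apply_ne_zpow_apply hr hs hr' hs' x
  rcases Int.emod_two_eq_zero_or_one j with hj | hj <;>
    rcases Int.emod_two_eq_zero_or_one k with hk | hk
  · rw [altWalk_of_even hj, altWalk_of_even hk, zpow_apply_eq_zpow_apply_iff, hhalf (by omega)]
  · rw [altWalk_of_even hj, altWalk_of_odd hk]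
    exact iff_of_false (hne _ _).symm (hparity (by omega))
  · rw [altWalk_of_odd hj, altWalk_of_even hk]
    exact iff_of_false (hne _ _) (hparity (by omega))
  · rw [altWalk_of_odd hj, altWalk_of_odd hk, r.injective.eq_iff, zpow_apply_eq_zpow_apply_iff,
      hhalf (by omega)]

end Equiv.Perm

namespace TaitGraph

variable {V : Type}

lemma Conn.symm {Γ : TaitGraph V} {c : Fin 3} {x y : V} (h : Γ.Conn c x y) : Γ.Conn c y x := by
  induction h with
  | refl => exact .refl
  | tail _ hstep ih =>
    obtain ⟨c', hc', rfl⟩ := hstep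
    exact ih.head ⟨c', hc', Γ.invol c' _⟩

lemma Conn.of_closed {Γ : TaitGraph V} {c : Fin 3} {P : V → Prop}
    (hP : ∀ c', c' ≠ c → ∀ w, P w → P (Γ.mat c' w)) {x y : V} (h : Γ.Conn c x y)
    (hx : P x) : P y := by
  induction h with
  | refl => exact hx
  | tail _ hstep ih =>
    obtain ⟨c', hc', rfl⟩ := hstep
    exact hP c' hc' _ ih

section

variable (Γ : TaitGraph V)

lemma mat_injective (c : Fin 3) : Function.Injective (Γ.mat c) :=
  Function.LeftInverse.injective (Γ.invol c)

lemma conn_equivalence (c : Fin 3) : Equivalence (Γ.Conn c) :=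
  ⟨fun _ => .refl, Conn.symm, .trans⟩

lemma conn_of_onePatch (hone : Γ.OnePatch) (c : Fin 3) (x y : V) : Γ.Conn c x y := by
  have : Subsingleton (Quot (Γ.Conn c)) :=
    (Nat.card_eq_one_iff_unique.1 (hone c)).1
  exact (Γ.conn_equivalence c).eqvGen_iff.1 (Quot.eq.1 (Subsingleton.elim _ _))

lemma nonempty_of_onePatch (hone : Γ.OnePatch) : Nonempty V := by
  obtain ⟨q⟩ := (Nat.card_eq_one_iff_unique.1 (hone 0)).2
  exact ⟨q.out⟩

end

lemma Bipartite.exists_extend {P : V → Prop} {Γ' : TaitGraph {w // P w}} (h : Γ'.Bipartite) :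
    ∃ ℓ : V → Bool, ∀ c w, ℓ (Γ'.mat c w).1 = !ℓ w.1 := by
  classical
  obtain ⟨σ, hσ⟩ := h
  refine ⟨fun w => if h : P w then σ ⟨w, h⟩ else false, fun c w => ?_⟩
  simp only [dif_pos (Γ'.mat c w).2, dif_pos w.2]
  exact hσ c w

/-- Crossing of the chords `x — y` and `p — q` of a polygon, listed with `x < y` and `p < q`. -/
def Cross (x y p q : ℤ) : Prop := (x < p ∧ p < y ∧ y < q) ∨ (p < x ∧ x < q ∧ q < y)

/-! ### Compression -/

section Compression

variable (Γ : TaitGraph V) (c₀ : Fin 3) (v : V)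
  (hpar : ∀ c, c ≠ c₀ → Γ.mat c v ≠ Γ.mat c₀ v)

open scoped Classical in
noncomputable def compressMat (c : Fin 3) (w : {w : V // w ≠ v ∧ w ≠ Γ.mat c₀ v}) :
    {w : V // w ≠ v ∧ w ≠ Γ.mat c₀ v} :=
  if hc : c = c₀ then
    ⟨Γ.mat c₀ w, fun h => w.2.2 ((Γ.invol c₀ w).symm.trans (congrArg _ h)),
      fun h => w.2.1 (Γ.mat_injective c₀ h)⟩
  else if h₁ : Γ.mat c w = v then
    ⟨Γ.mat c (Γ.mat c₀ v),
      fun h => hpar c hc ((congrArg (Γ.mat c) h).symm.trans (Γ.invol c _)), Γ.nofix c _⟩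
  else if h₂ : Γ.mat c w = Γ.mat c₀ v then
    ⟨Γ.mat c v, Γ.nofix c v, hpar c hc⟩
  else ⟨Γ.mat c w, h₁, h₂⟩

variable {Γ c₀ v}

lemma compressMat_self (w) : (Γ.compressMat c₀ v hpar c₀ w).1 = Γ.mat c₀ w := by
  simp [compressMat]

lemma compressMat_of_eq_left {c : Fin 3} (hc : c ≠ c₀) {w} (h : Γ.mat c w.1 = v) :
    (Γ.compressMat c₀ v hpar c w).1 = Γ.mat c (Γ.mat c₀ v) := by
  simp [compressMat, hc, h]

lemma compressMat_of_eq_right {c : Fin 3} (hc : c ≠ c₀) {w} (h : Γ.mat c w.1 = Γ.mat c₀ v) :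
    (Γ.compressMat c₀ v hpar c w).1 = Γ.mat c v := by
  simp [compressMat, hc, h, Γ.nofix c₀ v]

lemma compressMat_of_ne {c : Fin 3} (hc : c ≠ c₀) {w} (h₁ : Γ.mat c w.1 ≠ v)
    (h₂ : Γ.mat c w.1 ≠ Γ.mat c₀ v) : (Γ.compressMat c₀ v hpar c w).1 = Γ.mat c w := by
  simp [compressMat, hc, h₁, h₂]

lemma compressMat_invol (c : Fin 3) (w) :
    Γ.compressMat c₀ v hpar c (Γ.compressMat c₀ v hpar c w) = w := by
  apply Subtype.ext
  by_cases hc : c = c₀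
  · subst hc
    rw [compressMat_self, compressMat_self, Γ.invol]
  by_cases h₁ : Γ.mat c w.1 = v
  · have e := compressMat_of_eq_left hpar hc h₁
    rw [compressMat_of_eq_right hpar hc (by rw [e, Γ.invol])]
    exact ((Γ.invol c w).symm.trans (congrArg _ h₁)).symm
  by_cases h₂ : Γ.mat c w.1 = Γ.mat c₀ v
  · have e := compressMat_of_eq_right hpar hc h₂
    rw [compressMat_of_eq_left hpar hc (by rw [e, Γ.invol])]
    exact ((Γ.invol c w).symm.trans (congrArg _ h₂)).symm
  have e := compressMat_of_ne hpar hc h₁ h₂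
  rw [compressMat_of_ne hpar hc (by rw [e, Γ.invol]; exact w.2.1)
    (by rw [e, Γ.invol]; exact w.2.2), e, Γ.invol]

lemma compressMat_ne (c : Fin 3) (w) : Γ.compressMat c₀ v hpar c w ≠ w := by
  intro h
  have h' := congrArg Subtype.val h
  by_cases hc : c = c₀
  · subst hc
    exact Γ.nofix _ _ ((compressMat_self hpar w).symm.trans h')
  by_cases h₁ : Γ.mat c w.1 = v
  · rw [compressMat_of_eq_left hpar hc h₁] at h'
    exact Γ.nofix c₀ v (by rw [← Γ.invol c (Γ.mat c₀ v), h', h₁])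
  by_cases h₂ : Γ.mat c w.1 = Γ.mat c₀ v
  · rw [compressMat_of_eq_right hpar hc h₂] at h'
    exact Γ.nofix c₀ v (h₂.symm.trans (by rw [← h', Γ.invol]))
  · rw [compressMat_of_ne hpar hc h₁ h₂] at h'
    exact Γ.nofix c w h'

variable (Γ c₀ v)

noncomputable def compress : TaitGraph {w : V // w ≠ v ∧ w ≠ Γ.mat c₀ v} where
  mat := Γ.compressMat c₀ v hpar
  invol := compressMat_invol hpar
  nofix := compressMat_ne hpar

lemma compress_mat : (Γ.compress c₀ v hpar).mat = Γ.compressMat c₀ v hpar := rfl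

lemma isCompression_compress : Γ.IsCompression c₀ v (Γ.compress c₀ v hpar) := by
  refine ⟨Equiv.refl _, compressMat_self hpar, fun c hc w => ?_⟩
  by_cases h₁ : Γ.mat c w.1 = v
  · exact .inl ⟨h₁, compressMat_of_eq_left hpar hc h₁⟩
  by_cases h₂ : Γ.mat c w.1 = Γ.mat c₀ v
  · exact .inr (.inl ⟨h₂, compressMat_of_eq_right hpar hc h₂⟩)
  · exact .inr (.inr ⟨h₁, h₂, compressMat_of_ne hpar hc h₁ h₂⟩)

end Compression

/-! ### Coordinates on a Hamiltonian bicolored cycle -/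

/-- Coordinates on a Hamiltonian bicolored cycle of the two colors other than `c₀`: `f` runs
around the cycle with period `n`, taking steps `2i → 2i+1` along color `a` and `2i+1 → 2i+2`
along color `b`. The edges of color `c₀` are then chords of the `n`-gon. -/
structure CycleCoord (Γ : TaitGraph V) (c₀ : Fin 3) (n : ℤ) where
  a : Fin 3
  b : Fin 3
  a_ne : a ≠ c₀
  b_ne : b ≠ c₀
  a_ne_b : a ≠ b
  two_le : 2 ≤ n
  emod_two : n % 2 = 0
  f : ℤ → V
  f_eq_f_iff : ∀ j k, f j = f k ↔ j ≡ k [ZMOD n]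
  surjective : Function.Surjective f
  mat_a : ∀ k, k % 2 = 0 → Γ.mat a (f k) = f (k + 1)
  mat_b : ∀ k, k % 2 = 1 → Γ.mat b (f k) = f (k + 1)

theorem exists_cycleCoord (Γ : TaitGraph V) [Finite V] [Nonempty V] {a b c₀ : Fin 3}
    (ha : a ≠ c₀) (hb : b ≠ c₀) (hab : a ≠ b) (hconn : ∀ x y, Γ.Conn c₀ x y) :
    ∃ n, Nonempty (Γ.CycleCoord c₀ n) := by
  obtain ⟨v₀⟩ := ‹Nonempty V›
  let r : Equiv.Perm V := Function.Involutive.toPerm _ (Γ.invol a)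
  let s : Equiv.Perm V := Function.Involutive.toPerm _ (Γ.invol b)
  let f := Equiv.Perm.altWalk r s v₀
  have hA : ∀ k, k % 2 = 0 → Γ.mat a (f k) = f (k + 1) := fun _ hk =>
    Equiv.Perm.apply_altWalk_of_even (r := r) (s := s) hk
  have hB : ∀ k, k % 2 = 1 → Γ.mat b (f k) = f (k + 1) := fun _ hk =>
    Equiv.Perm.apply_altWalk_of_odd (r := r) (s := s) hk
  have hstep : ∀ c, c ≠ c₀ → ∀ k, ∃ j, f j = Γ.mat c (f k) := fun c hc k => by
    rcases fin_three_eq_or_eq hab ha hb hc with rfl | rfl <;>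
      rcases Int.emod_two_eq_zero_or_one k with hk | hk
    · exact ⟨k + 1, (hA k hk).symm⟩
    · exact ⟨k - 1, by rw [← Γ.invol _ (f (k - 1)), hA (k - 1) (by omega), sub_add_cancel]⟩
    · exact ⟨k - 1, by rw [← Γ.invol _ (f (k - 1)), hB (k - 1) (by omega), sub_add_cancel]⟩
    · exact ⟨k + 1, (hB k hk).symm⟩
  have hM := MulAction.period_pos_of_orderOf_pos (orderOf_pos (s * r)) v₀
  exact ⟨_, ⟨{
    a := a
    b := b
    a_ne := ha
    b_ne := hb
    a_ne_b := hab
    two_le := by omega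
    emod_two := by omega
    f := f
    f_eq_f_iff := Equiv.Perm.altWalk_eq_altWalk_iff (r := r) (s := s) (Γ.invol a) (Γ.invol b)
      (Γ.nofix a) (Γ.nofix b) v₀
    surjective := fun w => Conn.of_closed (P := fun w => ∃ k, f k = w)
      (fun c hc _ ⟨k, hk⟩ => hk ▸ hstep c hc k) (hconn v₀ w)
      ⟨0, by simp [f, Equiv.Perm.altWalk]⟩
    mat_a := hA
    mat_b := hB }⟩⟩

namespace CycleCoord

variable {Γ : TaitGraph V} {c₀ : Fin 3} {n : ℤ}

section

variable (C : Γ.CycleCoord c₀ n)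

lemma f_add_period (k : ℤ) : C.f (k + n) = C.f k :=
  (C.f_eq_f_iff _ _).2 (Int.add_modEq_right ..)

lemma f_emod (k : ℤ) : C.f (k % n) = C.f k :=
  (C.f_eq_f_iff _ _).2 (Int.mod_modEq k n)

lemma eq_of_f_eq {j k : ℤ} (hj : 0 ≤ j) (hjn : j < n) (hk : 0 ≤ k) (hkn : k < n)
    (h : C.f j = C.f k) : j = k := by
  have h' : j % n = k % n := (C.f_eq_f_iff j k).1 h
  rwa [Int.emod_eq_of_lt hj hjn, Int.emod_eq_of_lt hk hkn] at h'

lemma f_ne_f {j k : ℤ} (hjk : j < k) (hkj : k < j + n) : C.f j ≠ C.f k := fun h => by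
  have := Int.eq_zero_of_dvd_of_nonneg_of_lt (by omega) (by omega)
    (Int.ModEq.dvd ((C.f_eq_f_iff j k).1 h))
  omega

def col (k : ℤ) : Fin 3 := if k % 2 = 0 then C.a else C.b

lemma col_ne (k : ℤ) : C.col k ≠ c₀ := by
  unfold col; split_ifs
  exacts [C.a_ne, C.b_ne]

lemma col_eq_col {j k : ℤ} (h : j % 2 = k % 2) : C.col j = C.col k := by
  simp only [col, h]

lemma mat_col (k : ℤ) : Γ.mat (C.col k) (C.f k) = C.f (k + 1) := by
  unfold col; split_ifs with h
  exacts [C.mat_a k h, C.mat_b k (by omega)]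

lemma mat_col_succ (k : ℤ) : Γ.mat (C.col k) (C.f (k + 1)) = C.f k := by
  rw [← C.mat_col, Γ.invol]

lemma mat_f_of_ne {c : Fin 3} (hc : c ≠ c₀) (k : ℤ) :
    Γ.mat c (C.f k) = C.f (k + 1) ∨ Γ.mat c (C.f k) = C.f (k - 1) := by
  have hk : c = C.col k ∨ c = C.col (k - 1) := by
    rcases fin_three_eq_or_eq C.a_ne_b C.a_ne C.b_ne hc with rfl | rfl <;>
      simp only [col] <;> split_ifs <;> simp_all <;> omega
  rcases hk with rfl | rfl
  · exact .inl (C.mat_col k)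
  · right; simpa using C.mat_col_succ (k - 1)

lemma conn_f_f (j k : ℤ) : Γ.Conn c₀ (C.f j) (C.f k) := by
  have key : ∀ j k, j ≤ k → Γ.Conn c₀ (C.f j) (C.f k) := fun j k hjk => by
    induction k, hjk using Int.leInduction with
    | base => exact .refl
    | succ k _ ih => exact ih.tail ⟨C.col k, C.col_ne k, C.mat_col k⟩
  rcases le_total j k with h | h
  exacts [key j k h, (key k j h).symm]

noncomputable def pos (v : V) : ℤ := (C.surjective v).choose % n

lemma pos_nonneg (v : V) : 0 ≤ C.pos v := Int.emod_nonneg _ (by linarith [C.two_le])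

lemma pos_lt (v : V) : C.pos v < n := Int.emod_lt_of_pos _ (by linarith [C.two_le])

lemma f_pos (v : V) : C.f (C.pos v) = v := by
  rw [pos, C.f_emod]; exact (C.surjective v).choose_spec

lemma pos_emod_two (k : ℤ) : C.pos (C.f k) % 2 = k % 2 :=
  Int.ModEq.of_dvd (Int.dvd_of_emod_eq_zero C.emod_two) ((C.f_eq_f_iff _ _).1 (C.f_pos _))

noncomputable def γ (k : ℤ) : ℤ := C.pos (Γ.mat c₀ (C.f k))

lemma f_γ (k : ℤ) : C.f (C.γ k) = Γ.mat c₀ (C.f k) := C.f_pos _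

lemma γ_nonneg (k : ℤ) : 0 ≤ C.γ k := C.pos_nonneg _

lemma γ_lt (k : ℤ) : C.γ k < n := C.pos_lt _

lemma γ_γ {k : ℤ} (hk : 0 ≤ k) (hkn : k < n) : C.γ (C.γ k) = k :=
  C.eq_of_f_eq (C.γ_nonneg _) (C.γ_lt _) hk hkn (by rw [f_γ, f_γ, Γ.invol])

lemma γ_ne (k : ℤ) : C.γ k ≠ k := fun h =>
  Γ.nofix c₀ (C.f k) (by rw [← f_γ, h])

noncomputable def sign (v : V) : Bool := decide (C.pos v % 2 = 0)

lemma sign_f (k : ℤ) : C.sign (C.f k) = decide (k % 2 = 0) := by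
  rw [sign, C.pos_emod_two]

lemma sign_mat_of_ne {c : Fin 3} (hc : c ≠ c₀) (v : V) : C.sign (Γ.mat c v) = !C.sign v := by
  obtain ⟨k, rfl⟩ := C.surjective v
  rcases C.mat_f_of_ne hc k with h | h <;>
    · rw [h, sign_f, sign_f]
      by_cases hk : k % 2 = 0 <;> simp [hk] <;> omega

lemma eq_iff_of_alternating {s : V → Bool} (hs : ∀ c v, c ≠ c₀ → s (Γ.mat c v) = !s v)
    (j k : ℤ) : s (C.f j) = s (C.f k) ↔ (j - k) % 2 = 0 := by
  have hflip : ∀ i, s (C.f (i + 1)) = !s (C.f i) := fun i => by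
    rw [← C.mat_col, hs _ _ (C.col_ne i)]
  have key : ∀ j k, k ≤ j → (s (C.f j) = s (C.f k) ↔ (j - k) % 2 = 0) := fun j k hkj =>
    Int.eq_iff_emod_two_of_flip (ℓ := s ∘ C.f) (fun i _ _ => hflip i) j hkj le_rfl
  rcases le_total k j with h | h
  · exact key j k h
  · rw [eq_comm, key k j h]; omega

lemma orientationReversing_iff (k : ℤ) :
    Γ.OrientationReversing c₀ (C.f k) ↔ (k + C.γ k) % 2 = 0 := by
  rw [OrientationReversing, ← C.f_γ]
  constructor
  · intro h
    have := h.2 C.sign fun c v hc => C.sign_mat_of_ne hc v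
    rw [sign_f, sign_f, decide_eq_decide] at this
    omega
  · intro h
    exact ⟨C.conn_f_f _ _,
      fun s hs => (C.eq_iff_of_alternating (fun c v hc => hs c v hc) _ _).2 (by omega)⟩

lemma mat_ne_of_orientationReversing {k : ℤ} (hk : Γ.OrientationReversing c₀ (C.f k))
    {c : Fin 3} (hc : c ≠ c₀) : Γ.mat c (C.f k) ≠ Γ.mat c₀ (C.f k) := fun h => by
  have h₁ := hk.2 C.sign fun c v hc => C.sign_mat_of_ne hc v
  rw [← h, C.sign_mat_of_ne hc] at h₁
  exact Bool.not_ne_self _ h₁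

lemma exists_orientationReversing (hΓ : ¬ Γ.Bipartite) :
    ∃ k, Γ.OrientationReversing c₀ (C.f k) := by
  by_contra! h
  refine hΓ ⟨C.sign, fun c v => ?_⟩
  by_cases hc : c = c₀
  · subst hc
    obtain ⟨k, rfl⟩ := C.surjective v
    have hk := (C.orientationReversing_iff k).not.1 (h k)
    rw [← C.f_γ, sign_f, sign_f]
    by_cases hk2 : k % 2 = 0 <;> simp [hk2] <;> omega
  · exact C.sign_mat_of_ne hc v

def rot (t : ℤ) : Γ.CycleCoord c₀ n where
  a := C.col t
  b := C.col (t + 1)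
  a_ne := C.col_ne t
  b_ne := C.col_ne (t + 1)
  a_ne_b := by
    simp only [col]
    split_ifs <;> first | omega | exact C.a_ne_b | exact C.a_ne_b.symm
  two_le := C.two_le
  emod_two := C.emod_two
  f k := C.f (k + t)
  f_eq_f_iff j k := (C.f_eq_f_iff _ _).trans
    ⟨Int.ModEq.add_right_cancel' t, Int.ModEq.add_right t⟩
  surjective v := by
    obtain ⟨k, rfl⟩ := C.surjective v
    exact ⟨k - t, by simp⟩
  mat_a k hk := by
    rw [C.col_eq_col (by omega : t % 2 = (k + t) % 2), C.mat_col, add_right_comm]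
  mat_b k hk := by
    rw [C.col_eq_col (by omega : (t + 1) % 2 = (k + t) % 2), C.mat_col, add_right_comm]

lemma rot_f (t k : ℤ) : (C.rot t).f k = C.f (k + t) := rfl

end

lemma natCard_eq (C : Γ.CycleCoord c₀ n) : (Nat.card V : ℤ) = n := by
  have hbij : Function.Bijective fun i : Fin n.toNat => C.f i := by
    refine ⟨fun i j h => Fin.ext ?_, fun v => ?_⟩
    · have := C.eq_of_f_eq (by omega) (by omega) (by omega) (by omega) h
      omega
    · refine ⟨⟨(C.pos v).toNat, by have := C.pos_lt v; have := C.pos_nonneg v; omega⟩, ?_⟩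
      simp only
      rw [Int.toNat_of_nonneg (C.pos_nonneg v), C.f_pos]
  rw [← Nat.card_eq_of_bijective _ hbij, Nat.card_eq_fintype_card, Fintype.card_fin]
  have := C.two_le
  omega

/-! ### The crossing rule -/

section

variable (C : Γ.CycleCoord c₀ n)

lemma f_ne_and_ne {x s : ℤ} (hx : 0 ≤ x) (hxy : x < C.γ x) (hxs : x < s) (hsx : s < x + n)
    (hsy : s ≠ C.γ x) : C.f s ≠ C.f x ∧ C.f s ≠ Γ.mat c₀ (C.f x) := by
  have := C.γ_lt x
  rw [← C.f_γ]
  refine ⟨(C.f_ne_f hxs hsx).symm, ?_⟩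
  rcases lt_or_gt_of_ne hsy with h | h
  exacts [C.f_ne_f h (by omega), (C.f_ne_f h (by omega)).symm]

/-- Compressing the reversing chord `x — y` reverses the arc `(y, x + n)` of the cycle and glues
it to the arc `(x, y)` by the edge `x+1 — y+1`; a labeling of the compression alternates along
this new cycle. -/
lemma eq_iff_of_flip_compress {x : ℤ} (hx : 0 ≤ x) (hxy : x < C.γ x)
    (hrev : (x + C.γ x) % 2 = 0)
    (hpar : ∀ c, c ≠ c₀ → Γ.mat c (C.f x) ≠ Γ.mat c₀ (C.f x)) {ℓ : V → Bool}
    (hℓ : ∀ c w, ℓ ((Γ.compress c₀ (C.f x) hpar).mat c w).1 = !ℓ w.1) {s : ℤ}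
    (h₁ : x < s) (h₂ : s < x + n) (h₃ : s ≠ C.γ x) : ℓ (C.f s) = ℓ (C.f (x + 1)) ↔
      (s < C.γ x ∧ (s - x) % 2 = 1) ∨ (C.γ x < s ∧ (s - x) % 2 = 0) := by
  set y := C.γ x
  have hyn := C.γ_lt x
  have hstep : ∀ s, x < s → s + 1 < x + n → s ≠ y → s + 1 ≠ y →
      ℓ (C.f (s + 1)) = !ℓ (C.f s) := fun s h₁ h₂ h₃ h₄ => by
    have hs₁ := C.f_ne_and_ne hx hxy (by omega) h₂ h₄
    rw [← hℓ (C.col s) ⟨C.f s, C.f_ne_and_ne hx hxy h₁ (by omega) h₃⟩, compress_mat,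
      compressMat_of_ne hpar (C.col_ne s) (by rw [C.mat_col]; exact hs₁.1)
        (by rw [C.mat_col]; exact hs₁.2), C.mat_col]
  rcases lt_or_gt_of_ne h₃ with h | h
  · have := Int.eq_iff_emod_two_of_flip (ℓ := ℓ ∘ C.f) (a := x + 1) (b := y - 1)
      (fun t h₁ h₂ => hstep t (by omega) (by omega) (by omega) (by omega)) s (by omega)
      (by omega)
    simp only [Function.comp] at this
    rw [this]
    omega
  · have hglue : ℓ (C.f (y + 1)) = !ℓ (C.f (x + 1)) := by
      rw [← hℓ (C.col x)
          ⟨C.f (x + 1), C.f_ne_and_ne hx hxy (by omega) (by omega) (by omega)⟩,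
        compress_mat, compressMat_of_eq_left hpar (C.col_ne x) (C.mat_col_succ x), ← C.f_γ,
        C.col_eq_col (by omega : x % 2 = y % 2), C.mat_col]
    have := Int.eq_iff_emod_two_of_flip (ℓ := ℓ ∘ C.f) (a := y + 1) (b := x + n - 1)
      (fun t h₁ h₂ => hstep t (by omega) (by omega) (by omega) (by omega)) s (by omega)
      (by omega)
    simp only [Function.comp, hglue] at this
    have hneg : ℓ (C.f s) = ℓ (C.f (x + 1)) ↔ ¬ ℓ (C.f s) = !ℓ (C.f (x + 1)) := by
      cases ℓ (C.f s) <;> cases ℓ (C.f (x + 1)) <;> simp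
    rw [hneg, this]
    omega

lemma ne_γ_of_lt_γ {x p : ℤ} (hx : 0 ≤ x) (hxy : x < C.γ x) (hp : 0 ≤ p) (hpq : p < C.γ p)
    (hpx : p ≠ x) : p ≠ C.γ x ∧ C.γ p ≠ x ∧ C.γ p ≠ C.γ x := by
  have hyx : C.γ (C.γ x) = x := C.γ_γ hx (by linarith [C.γ_lt x])
  have hqp : C.γ (C.γ p) = p := C.γ_γ hp (by linarith [C.γ_lt p])
  refine ⟨fun h => ?_, fun h => ?_, fun h => hpx (by rw [← hqp, h, hyx])⟩
  · rw [h, hyx] at hpq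
    omega
  · rw [h] at hqp
    omega

lemma exists_shift_mem_Ioo {x s : ℤ} (hx : 0 ≤ x) (hxn : x < n) (hs : 0 ≤ s) (hsn : s < n)
    (hsx : s ≠ x) :
    ∃ s', x < s' ∧ s' < x + n ∧ C.f s' = C.f s ∧ (s' = s ∨ s' = s + n) := by
  rcases lt_or_gt_of_ne hsx with h | h
  · exact ⟨s + n, by omega, by omega, C.f_add_period s, .inr rfl⟩
  · exact ⟨s, h, by omega, rfl, .inl rfl⟩

lemma reversing_iff_cross_of_bipartite_compress {x : ℤ} (hx : 0 ≤ x) (hxy : x < C.γ x)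
    (hrev : (x + C.γ x) % 2 = 0)
    (hpar : ∀ c, c ≠ c₀ → Γ.mat c (C.f x) ≠ Γ.mat c₀ (C.f x))
    (hbip : (Γ.compress c₀ (C.f x) hpar).Bipartite) {p : ℤ} (hp : 0 ≤ p) (hpq : p < C.γ p)
    (hpx : p ≠ x) : (p + C.γ p) % 2 = 0 ↔ Cross x (C.γ x) p (C.γ p) := by
  obtain ⟨ℓ, hℓ⟩ := hbip.exists_extend
  obtain ⟨hpy, hqx, hqy⟩ := C.ne_γ_of_lt_γ hx hxy hp hpq hpx
  have hyn := C.γ_lt x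
  have hqn := C.γ_lt p
  obtain ⟨p', hp'₁, hp'₂, hfp', hp'⟩ :=
    C.exists_shift_mem_Ioo hx (by omega) hp (by omega) hpx
  obtain ⟨q', hq'₁, hq'₂, hfq', hq'⟩ :=
    C.exists_shift_mem_Ioo hx (by omega) (C.γ_nonneg p) hqn hqx
  have hp'y : p' ≠ C.γ x := by omega
  have hq'y : q' ≠ C.γ x := by omega
  have hchord : ℓ (C.f q') = !ℓ (C.f p') := by
    have h := hℓ c₀ ⟨C.f p', C.f_ne_and_ne hx hxy hp'₁ hp'₂ hp'y⟩
    simp only [compress_mat, compressMat_self] at h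
    rw [hfp', ← C.f_γ] at h
    rwa [hfq', hfp']
  have hP := C.eq_iff_of_flip_compress hx hxy hrev hpar hℓ hp'₁ hp'₂ hp'y
  have hQ := C.eq_iff_of_flip_compress hx hxy hrev hpar hℓ hq'₁ hq'₂ hq'y
  rw [hchord] at hQ
  have hPQ : ((p' < C.γ x ∧ (p' - x) % 2 = 1) ∨ (C.γ x < p' ∧ (p' - x) % 2 = 0)) ↔
      ¬ ((q' < C.γ x ∧ (q' - x) % 2 = 1) ∨ (C.γ x < q' ∧ (q' - x) % 2 = 0)) := by
    rw [← hP, ← hQ]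
    cases ℓ (C.f p') <;> cases ℓ (C.f (x + 1)) <;> simp
  have := C.emod_two
  unfold Cross
  rcases hp' with rfl | rfl <;> rcases hq' with rfl | rfl <;> omega

/-- By `orientationReversing_iff`, this says that a chord is orientation-reversing iff it
crosses a given orientation-reversing chord. -/
def CrossingRule : Prop :=
  ∀ x p, 0 ≤ x → x < C.γ x → (x + C.γ x) % 2 = 0 → 0 ≤ p → p < C.γ p →
    p ≠ x → ((p + C.γ p) % 2 = 0 ↔ Cross x (C.γ x) p (C.γ p))

lemma crossingRule_of_bipartite_compress
    (hbip : ∀ v hpar, Γ.OrientationReversing c₀ v → (Γ.compress c₀ v hpar).Bipartite) :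
    C.CrossingRule := fun x _ hx hxy hrev hp hpq hpx =>
  have hv := (C.orientationReversing_iff x).2 hrev
  C.reversing_iff_cross_of_bipartite_compress hx hxy hrev _
    (hbip _ (fun _ hc => C.mat_ne_of_orientationReversing hv hc) hv) hp hpq hpx

lemma mat_a_f (k : ℤ) : Γ.mat C.a (C.f k) = C.f (if k % 2 = 0 then k + 1 else k - 1) := by
  split_ifs with hk
  · exact C.mat_a k hk
  · rw [← Γ.invol C.a (C.f (k - 1)), C.mat_a (k - 1) (by omega), sub_add_cancel]

/-- Since the chords and the `a`-edges form a single bicolored cycle, no proper set of positions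
is closed under both. -/
lemma mem_of_closed (hconn : ∀ x y, Γ.Conn C.b x y) {S : Set ℤ}
    (hS : ∀ k ∈ S, 0 ≤ k ∧ k < n) (h0 : 0 ∈ S)
    (hpair : ∀ k ∈ S, (if k % 2 = 0 then k + 1 else k - 1) ∈ S)
    (hγ : ∀ k ∈ S, C.γ k ∈ S) {k : ℤ} (hk : 0 ≤ k) (hkn : k < n) : k ∈ S := by
  obtain ⟨j, hj, hjk⟩ : ∃ j ∈ S, C.f j = C.f k := by
    refine Conn.of_closed (P := fun w => ∃ j ∈ S, C.f j = w) (fun c hc w ⟨j, hj, hjw⟩ => ?_)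
      (hconn (C.f 0) (C.f k)) ⟨0, h0, rfl⟩
    subst hjw
    rcases fin_three_eq_or_eq C.a_ne C.a_ne_b C.b_ne.symm hc with rfl | rfl
    · exact ⟨_, hpair j hj, (C.mat_a_f j).symm⟩
    · exact ⟨_, hγ j hj, C.f_γ j⟩
  rwa [← C.eq_of_f_eq (hS j hj).1 (hS j hj).2 hk hkn hjk]

lemma lt_and_lt_iff_of_forall_reversing (hrule : C.CrossingRule)
    (hall : ∀ k, 0 ≤ k → k < n → (k + C.γ k) % 2 = 0) {x k : ℤ} (hx : 0 ≤ x)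
    (hxy : x < C.γ x) (hk : 0 ≤ k) (hkn : k < n) (hkx : k ≠ x) (hky : k ≠ C.γ x) :
    C.γ k ≠ x ∧ C.γ k ≠ C.γ x ∧
      (x < k ∧ k < C.γ x ↔ ¬ (x < C.γ k ∧ C.γ k < C.γ x)) := by
  have hkk : C.γ (C.γ k) = k := C.γ_γ hk hkn
  have hyx : C.γ (C.γ x) = x := C.γ_γ hx (by linarith [C.γ_lt x])
  have hlx : C.γ k ≠ x := fun h => hky (by rw [← hkk, h])
  have hly : C.γ k ≠ C.γ x := fun h => hkx (by rw [← hkk, h, hyx])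
  refine ⟨hlx, hly, ?_⟩
  have := C.γ_nonneg k
  have := C.γ_lt k
  have hrevx := hall x hx (by linarith [C.γ_lt x])
  rcases lt_or_gt_of_ne (C.γ_ne k) with h | h
  · have := (hrule x (C.γ k) hx hxy hrevx (C.γ_nonneg k) (by omega) hlx).1
      (by rw [hkk]; have := hall k hk hkn; omega)
    unfold Cross at this
    omega
  · have := (hrule x k hx hxy hrevx hk h hkx).1 (hall k hk hkn)
    unfold Cross at this
    omega

/-- The chord map exchanges the two arcs cut off by any chord, so these have equal length. -/
lemma two_mul_sub_eq_of_forall_reversing (hrule : C.CrossingRule)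
    (hall : ∀ k, 0 ≤ k → k < n → (k + C.γ k) % 2 = 0) {x : ℤ} (hx : 0 ≤ x)
    (hxy : x < C.γ x) : 2 * (C.γ x - x) = n := by
  have hyn := C.γ_lt x
  have hswap := fun k => C.lt_and_lt_iff_of_forall_reversing hrule hall (k := k) hx hxy
  have hcard : (Finset.Ioo x (C.γ x)).card = (Finset.Ico 0 x ∪ Finset.Ioo (C.γ x) n).card := by
    refine Finset.card_nbij' C.γ C.γ (fun k hk => ?_) (fun k hk => ?_) (fun k hk => ?_)
      (fun k hk => ?_)
    all_goals simp only [Finset.coe_Ioo, Finset.coe_union, Finset.coe_Ico, Set.mem_union,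
      Set.mem_Ioo, Set.mem_Ico] at hk ⊢
    · have := hswap k (by omega) (by omega) (by omega) (by omega)
      have := C.γ_nonneg k
      have := C.γ_lt k
      omega
    · have := hswap k (by omega) (by omega) (by omega) (by omega)
      omega
    · exact C.γ_γ (by omega) (by omega)
    · exact C.γ_γ (by omega) (by omega)
  rw [Finset.card_union_of_disjoint (Finset.disjoint_left.2 fun k h₁ h₂ => by
    simp only [Finset.mem_Ico, Finset.mem_Ioo] at h₁ h₂; omega), Int.card_Ioo, Int.card_Ico,
    Int.card_Ioo] at hcard
  omega

/-- Every chord is a diameter, so the chords at `0` and `1` together with two `a`-edges close up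
a bicolored 4-cycle. -/
lemma false_of_forall_reversing (hrule : C.CrossingRule) (hconn : ∀ x y, Γ.Conn C.b x y)
    (hn : 6 ≤ n) (hall : ∀ k, 0 ≤ k → k < n → (k + C.γ k) % 2 = 0) : False := by
  have hdiam : ∀ x, 0 ≤ x → x < C.γ x → 2 * (C.γ x - x) = n := fun _ =>
    C.two_mul_sub_eq_of_forall_reversing hrule hall
  have h0 : C.γ 0 = n / 2 := by
    have := hdiam 0 le_rfl (lt_of_le_of_ne (C.γ_nonneg 0) (C.γ_ne 0).symm)
    omega
  have h1 : C.γ 1 = n / 2 + 1 := by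
    have hne : C.γ 1 ≠ 0 := fun h => by
      have := C.γ_γ (k := 1) (by omega) (by omega)
      rw [h, h0] at this
      omega
    have := hdiam 1 zero_le_one (by have := C.γ_nonneg 1; have := C.γ_ne 1; omega)
    omega
  have hn0 : C.γ (n / 2) = 0 := by rw [← h0, C.γ_γ le_rfl (by omega)]
  have hn1 : C.γ (n / 2 + 1) = 1 := by rw [← h1, C.γ_γ zero_le_one (by omega)]
  have heven := hall 0 le_rfl (by omega)
  rw [h0] at heven
  have := C.mem_of_closed hconn (S := {0, 1, n / 2, n / 2 + 1})
    (by simp only [Set.mem_insert_iff, Set.mem_singleton_iff]; omega) (by simp)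
    (fun k hk => by
      simp only [Set.mem_insert_iff, Set.mem_singleton_iff] at hk ⊢
      split_ifs <;> omega)
    (fun k hk => by
      simp only [Set.mem_insert_iff, Set.mem_singleton_iff] at hk
      rcases hk with rfl | rfl | rfl | rfl <;> simp [h0, h1, hn0, hn1])
    (k := 2) (by omega) (by omega)
  simp only [Set.mem_insert_iff, Set.mem_singleton_iff] at this
  omega

lemma le_γ_of_first_reversing {L k : ℤ}
    (hmin : ∀ j, 0 ≤ j → j < L → (j + C.γ j) % 2 = 1) (hk : 0 ≤ k) (hkn : k < n)
    (hrev : (k + C.γ k) % 2 = 0) : L ≤ C.γ k := by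
  by_contra! h
  have := hmin _ (C.γ_nonneg k) h
  rw [C.γ_γ hk hkn] at this
  omega

/-- With `L` the first reversing position, a chord `p — q` with `p < L < q` would cross the
reversing chord `L — n-1` if that is one; otherwise, with `z = γ L` and `w = γ (n - 1)`, it
crosses `w — n-1` but not `L — z`, which forces `L < w < z < q < n - 1`. -/
lemma γ_lt_of_lt_first_reversing (hrule : C.CrossingRule)
    (hlast : (n - 1 + C.γ (n - 1)) % 2 = 0) {L : ℤ} (hL : 0 ≤ L) (hLn : L < n)
    (hrevL : (L + C.γ L) % 2 = 0) (hmin : ∀ k, 0 ≤ k → k < L → (k + C.γ k) % 2 = 1)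
    {p : ℤ} (hp : 0 ≤ p) (hpL : p < L) : C.γ p < L := by
  by_contra! hqL
  have hLz := C.le_γ_of_first_reversing hmin hL hLn hrevL
  have hLw := C.le_γ_of_first_reversing hmin (by omega) (by omega) hlast
  obtain ⟨q, hq⟩ : ∃ q, C.γ p = q := ⟨_, rfl⟩
  obtain ⟨z, hz⟩ : ∃ z, C.γ L = z := ⟨_, rfl⟩
  obtain ⟨w, hw⟩ : ∃ w, C.γ (n - 1) = w := ⟨_, rfl⟩
  have hqp : C.γ q = p := hq ▸ C.γ_γ hp (by omega)
  have hzL : C.γ z = L := hz ▸ C.γ_γ hL hLn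
  have hwn : C.γ w = n - 1 := hw ▸ C.γ_γ (by omega) (by omega)
  have hqn : q < n := hq ▸ C.γ_lt p
  have hzn : z < n := hz ▸ C.γ_lt L
  have hwn₁ : w < n - 1 :=
    lt_of_le_of_ne (hw ▸ by have := C.γ_lt (n - 1); omega) (hw ▸ C.γ_ne (n - 1))
  have hzL' : z ≠ L := hz ▸ C.γ_ne L
  have hpq := hmin p hp hpL
  have hqL' : q ≠ L := fun h => by
    rw [h] at hqp
    omega
  have hqn₁ : q ≠ n - 1 := fun h => by
    rw [h] at hqp
    omega
  have hqz : q ≠ z := fun h => by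
    rw [h] at hqp
    omega
  have hruleL := fun k => hrule L k hL (by omega) (by omega)
  by_cases hzn₁ : z = n - 1
  · have := (hruleL p hp (by omega) (by omega)).2 (by unfold Cross; omega)
    omega
  have hwL : w ≠ L := fun h => by
    rw [h] at hwn
    omega
  have hcross := (hruleL w (by omega) (by omega) (by omega)).1 (by omega)
  have hnot := (hruleL p hp (by omega) (by omega)).not.1 (by omega)
  have := (hrule w p (by omega) (by omega) (by omega) hp (by omega) (by omega)).2
    (by unfold Cross at hcross hnot ⊢; omega)
  omega

/-- The first reversing position `L` cuts off the arc `[0, L)`, which is closed under the chords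
and, having even length, under the `a`-edges. -/
lemma false_of_last_reversing_of_first_preserving (hrule : C.CrossingRule)
    (hconn : ∀ x y, Γ.Conn C.b x y) (hlast : (n - 1 + C.γ (n - 1)) % 2 = 0)
    (hfirst : C.γ 0 % 2 = 1) : False := by
  obtain ⟨L, ⟨hL, hrevL⟩, hmin⟩ := Int.exists_least_of_bdd
    (P := fun k => 0 ≤ k ∧ (k + C.γ k) % 2 = 0) ⟨0, fun _ h => h.1⟩
    ⟨n - 1, by linarith [C.two_le], hlast⟩
  have hLn : L ≤ n - 1 := hmin _ ⟨by linarith [C.two_le], hlast⟩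
  have hmin' : ∀ k, 0 ≤ k → k < L → (k + C.γ k) % 2 = 1 := fun k hk hkL => by
    have := mt (hmin k) (by omega)
    omega
  have hL0 : 0 < L := lt_of_le_of_ne hL fun h => by rw [← h] at hrevL; omega
  have hclosed : ∀ p, 0 ≤ p → p < L → C.γ p < L := fun p hp hpL =>
    C.γ_lt_of_lt_first_reversing hrule hlast hL (by omega) hrevL hmin' hp hpL
  have heven : L % 2 = 0 := by
    have := Finset.even_card_of_involution (Finset.Ico 0 L) C.γ
      (fun k hk => by
        rw [Finset.mem_Ico] at hk ⊢
        exact ⟨C.γ_nonneg k, hclosed k hk.1 hk.2⟩)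
      (fun k hk => by rw [Finset.mem_Ico] at hk; exact C.γ_γ hk.1 (by omega))
      (fun k _ => C.γ_ne k)
    rw [Int.card_Ico, Nat.even_iff] at this
    omega
  have := C.mem_of_closed hconn (S := Set.Ico 0 L) (fun k hk => ⟨hk.1, by have := hk.2; omega⟩)
    ⟨le_rfl, hL0⟩ (fun k hk => by simp only [Set.mem_Ico] at hk ⊢; split_ifs <;> omega)
    (fun k hk => ⟨C.γ_nonneg k, hclosed k hk.1 hk.2⟩) (k := L) hL (by omega)
  exact lt_irrefl L this.2

theorem exists_not_bipartite_compress (hone : Γ.OnePatch) (hn : 6 ≤ n) {k : ℤ}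
    (hk : Γ.OrientationReversing c₀ (C.f k)) :
    ∃ v hpar, Γ.OrientationReversing c₀ v ∧ ¬ (Γ.compress c₀ v hpar).Bipartite := by
  by_contra! hbip
  by_cases hall : ∀ j, Γ.OrientationReversing c₀ (C.f j)
  · exact C.false_of_forall_reversing (C.crossingRule_of_bipartite_compress hbip)
      (Γ.conn_of_onePatch hone C.b) hn fun j _ _ => (C.orientationReversing_iff j).1 (hall j)
  obtain ⟨j, hj⟩ := not_forall.1 hall
  have := Int.emod_lt_of_pos k (by omega : 0 < n)
  have := Int.emod_nonneg j (by omega : n ≠ 0)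
  obtain ⟨m, hm, hm₁⟩ := Int.exists_and_not_succ
    (Q := fun i => Γ.OrientationReversing c₀ (C.f i)) (i := k % n) (j := j % n + n) (by omega)
    (by rwa [C.f_emod]) (by rwa [C.f_add_period, C.f_emod])
  let C' := C.rot (m + 1)
  refine C'.false_of_last_reversing_of_first_preserving
    (C'.crossingRule_of_bipartite_compress hbip) (Γ.conn_of_onePatch hone _) ?_ ?_
  · rw [← C'.orientationReversing_iff]
    rwa [rot_f, show n - 1 + (m + 1) = m + n by ring, C.f_add_period]
  · have := (C'.orientationReversing_iff 0).not.1 (by rwa [rot_f, zero_add])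
    omega

end

end CycleCoord

end TaitGraph

/-- Let `Γ` be a 1-patch nonorientable (non-bipartite) Tait-colored
cubic graph other than the theta graph (i.e., with more than two vertices).  Then
`Γ` admits a c-compression — a compression along an orientation-reversing edge —
whose result is either a nonorientable graph or the theta graph. -/
theorem one_patch_nonorientable_admits_good_c_compression
    (V : Type) [Fintype V] (Γ : TaitGraph V)
    (hone : Γ.OnePatch) (hbip : ¬ Γ.Bipartite) (htheta : Nat.card V ≠ 2) :
    ∃ (c : Fin 3) (v : V) (Γ' : TaitGraph {w : V // w ≠ v ∧ w ≠ Γ.mat c v}),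
      Γ.OrientationReversing c v ∧ Γ.IsCompression c v Γ' ∧
      (¬ Γ'.Bipartite ∨ Nat.card {w : V // w ≠ v ∧ w ≠ Γ.mat c v} = 2) := by
  have : Nonempty V := Γ.nonempty_of_onePatch hone
  obtain ⟨n, ⟨C⟩⟩ := Γ.exists_cycleCoord (a := 0) (b := 1) (c₀ := 2) (by decide)
    (by decide) (by decide) (Γ.conn_of_onePatch hone 2)
  have hn := C.natCard_eq
  obtain ⟨k, hk⟩ := C.exists_orientationReversing hbip
  by_cases h4 : n = 4
  · have hpar := fun c (hc : c ≠ 2) => C.mat_ne_of_orientationReversing hk hc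
    refine ⟨2, C.f k, Γ.compress 2 (C.f k) hpar, hk, Γ.isCompression_compress 2 (C.f k) hpar,
      .inr ?_⟩
    rw [Nat.card_subtype_ne_and_ne (Γ.nofix 2 _).symm]
    omega
  · have := C.two_le
    have := C.emod_two
    obtain ⟨v, hpar, hv, hnb⟩ := C.exists_not_bipartite_compress hone (by omega) hk
    exact ⟨2, v, Γ.compress 2 v hpar, hv, Γ.isCompression_compress 2 v hpar, .inl hnb⟩
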